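/- arXiv:1811.07224 — 6 statements merged into one kernel-verified Lean document; each statement's English description precedes it below -/
import Mathlib

section
/- Let φ¹, φ², φ³, η, w, α¹³, α²³, α³³, β³ : ℝ⁴ → ℝ be smooth functions of the variables (x,y,t,u). For (x,y,t,u,v₁,v₂,v₃,f,g) ∈ ℝ⁹ define ζ₃ = η_t + η_u v₃ + (φ¹_t + φ¹_u v₃)v₁ + (φ²_t + φ²_u v₃)v₂ + (φ³_t + φ³_u v₃)v₃ and μ³ = (φ³_t + φ³_u v₃ − w − (φ¹_u v₁ + φ²_u v₂ + φ³_u v₃) + α³³)v₃ − (φ³_x + φ³_u v₁)f − (φ³_y + φ³_u v₂)g − α¹³ v₁ − α²³ v₂ + β³. If ζ₃ + μ³ = 0 identically (for all real values of x,y,t,u,v₁,v₂,v₃,f,g), then φ³_x = φ³_y = φ³_u = 0 (so φ³ depends only on t), α¹³ = φ¹_t, α²³ = φ²_t, β³ = −η_t, and w = α³³ + 2φ³_t + η_u, everywhere on ℝ⁴. -/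
/- STATEMENT 0: solution of the determining equation ζ₃ + μ³ = 0 for the
equivalence group of the family of wave equations u_tt = f_x + g_y + h. -/

noncomputable section

/-- Partial derivative with respect to the first variable (x) of a function on ℝ⁴. -/
def pd1 (f : ℝ × ℝ × ℝ × ℝ → ℝ) (p : ℝ × ℝ × ℝ × ℝ) : ℝ :=
  deriv (fun s => f (s, p.2.1, p.2.2.1, p.2.2.2)) p.1

/-- Partial derivative with respect to the second variable (y). -/
def pd2 (f : ℝ × ℝ × ℝ × ℝ → ℝ) (p : ℝ × ℝ × ℝ × ℝ) : ℝ :=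
  deriv (fun s => f (p.1, s, p.2.2.1, p.2.2.2)) p.2.1

/-- Partial derivative with respect to the third variable (t). -/
def pd3 (f : ℝ × ℝ × ℝ × ℝ → ℝ) (p : ℝ × ℝ × ℝ × ℝ) : ℝ :=
  deriv (fun s => f (p.1, p.2.1, s, p.2.2.2)) p.2.2.1

/-- Partial derivative with respect to the fourth variable (u). -/
def pd4 (f : ℝ × ℝ × ℝ × ℝ → ℝ) (p : ℝ × ℝ × ℝ × ℝ) : ℝ :=
  deriv (fun s => f (p.1, p.2.1, p.2.2.1, s)) p.2.2.2

theorem stmt_0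
    (φ1 φ2 φ3 η w α13 α23 α33 β3 : ℝ × ℝ × ℝ × ℝ → ℝ)
    (hφ1 : ContDiff ℝ (⊤ : ℕ∞) φ1) (hφ2 : ContDiff ℝ (⊤ : ℕ∞) φ2) (hφ3 : ContDiff ℝ (⊤ : ℕ∞) φ3)
    (hη : ContDiff ℝ (⊤ : ℕ∞) η) (hw : ContDiff ℝ (⊤ : ℕ∞) w)
    (hα13 : ContDiff ℝ (⊤ : ℕ∞) α13) (hα23 : ContDiff ℝ (⊤ : ℕ∞) α23) (hα33 : ContDiff ℝ (⊤ : ℕ∞) α33)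
    (hβ3 : ContDiff ℝ (⊤ : ℕ∞) β3)
    -- the determining equation ζ₃ + μ³ = 0, identically in (x,y,t,u,v₁,v₂,v₃,f,g)
    (h : ∀ (p : ℝ × ℝ × ℝ × ℝ) (v1 v2 v3 f g : ℝ),
      -- ζ₃
      (pd3 η p + pd4 η p * v3
        + (pd3 φ1 p + pd4 φ1 p * v3) * v1
        + (pd3 φ2 p + pd4 φ2 p * v3) * v2
        + (pd3 φ3 p + pd4 φ3 p * v3) * v3)
      -- + μ³
      + ((pd3 φ3 p + pd4 φ3 p * v3 - w p
            - (pd4 φ1 p * v1 + pd4 φ2 p * v2 + pd4 φ3 p * v3) + α33 p) * v3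
          - (pd1 φ3 p + pd4 φ3 p * v1) * f
          - (pd2 φ3 p + pd4 φ3 p * v2) * g
          - α13 p * v1 - α23 p * v2 + β3 p) = 0) :
    ∀ p : ℝ × ℝ × ℝ × ℝ,
      pd1 φ3 p = 0 ∧ pd2 φ3 p = 0 ∧ pd4 φ3 p = 0 ∧
      α13 p = pd3 φ1 p ∧ α23 p = pd3 φ2 p ∧ β3 p = - pd3 η p ∧
      w p = α33 p + 2 * pd3 φ3 p + pd4 η p := by
  intro p
  have h0 := h p 0 0 0 0 0
  have hf := h p 0 0 0 1 0
  have hg := h p 0 0 0 0 1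
  have hv1 := h p 1 0 0 0 0
  have hv1f := h p 1 0 0 1 0
  have hv2 := h p 0 1 0 0 0
  have hv3 := h p 0 0 1 0 0
  norm_num at h0 hf hg hv1 hv1f hv2 hv3
  have e4 : pd4 φ3 p = 0 := by linarith
  refine ⟨by linarith, by linarith, e4, by linarith, by linarith, by linarith, by nlinarith [e4]⟩
end
end

section
/- Let ξ¹, ξ², η, α³³, α¹¹, α¹², β¹ : ℝ⁴ → ℝ be smooth functions of (x,y,t,u) and ξ³ : ℝ → ℝ smooth. For (x,y,t,u,v₁,v₂,v₃,f,g) ∈ ℝ⁹ define μ¹ = (η_u + α³³ + 2ξ³'(t) + ξ²_u v₂ − ξ¹_x)f − (ξ¹_y + ξ¹_u v₂)g + α¹¹ v₁ + α¹² v₂ + (2ξ¹_t + ξ¹_u v₃)v₃ + β¹. If μ¹ is independent of v₃ and independent of g (i.e., ∂μ¹/∂v₃ = 0 and ∂μ¹/∂g = 0 identically), then ξ¹_t = ξ¹_u = ξ¹_y = 0 everywhere, i.e., ξ¹ depends only on x. -/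
/- STATEMENT 1: the determining condition S¹³ = 0 (μ¹ independent of v₃ and of g)
forces ξ¹ to depend only on x. -/

noncomputable section

/-- The generator μ¹ for the flux f, as a function of (x,y,t,u) = p and v₂,v₃ (= u_y,u_t
appearing explicitly), v₁, f, g. -/
def μ1 (ξ1 ξ2 η α33 α11 α12 β1 : ℝ × ℝ × ℝ × ℝ → ℝ) (ξ3 : ℝ → ℝ)
    (v1 v2 v3 f g : ℝ) (p : ℝ × ℝ × ℝ × ℝ) : ℝ :=
  (pd4 η p + α33 p + 2 * deriv ξ3 p.2.2.1 + pd4 ξ2 p * v2 - pd1 ξ1 p) * f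
    - (pd2 ξ1 p + pd4 ξ1 p * v2) * g
    + α11 p * v1 + α12 p * v2 + (2 * pd3 ξ1 p + pd4 ξ1 p * v3) * v3 + β1 p

theorem stmt_1
    (ξ1 ξ2 η α33 α11 α12 β1 : ℝ × ℝ × ℝ × ℝ → ℝ) (ξ3 : ℝ → ℝ)
    (hξ1 : ContDiff ℝ (⊤ : ℕ∞) ξ1) (hξ2 : ContDiff ℝ (⊤ : ℕ∞) ξ2) (hη : ContDiff ℝ (⊤ : ℕ∞) η)
    (hα33 : ContDiff ℝ (⊤ : ℕ∞) α33) (hα11 : ContDiff ℝ (⊤ : ℕ∞) α11) (hα12 : ContDiff ℝ (⊤ : ℕ∞) α12)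
    (hβ1 : ContDiff ℝ (⊤ : ℕ∞) β1) (hξ3 : ContDiff ℝ (⊤ : ℕ∞) ξ3)
    -- ∂μ¹/∂v₃ = 0 identically
    (hv3 : ∀ (p : ℝ × ℝ × ℝ × ℝ) (v1 v2 v3 f g : ℝ),
      deriv (fun s => μ1 ξ1 ξ2 η α33 α11 α12 β1 ξ3 v1 v2 s f g p) v3 = 0)
    -- ∂μ¹/∂g = 0 identically
    (hg : ∀ (p : ℝ × ℝ × ℝ × ℝ) (v1 v2 v3 f g : ℝ),
      deriv (fun s => μ1 ξ1 ξ2 η α33 α11 α12 β1 ξ3 v1 v2 v3 f s p) g = 0) :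
    ∀ p : ℝ × ℝ × ℝ × ℝ, pd3 ξ1 p = 0 ∧ pd4 ξ1 p = 0 ∧ pd2 ξ1 p = 0 := by

  intro p
  set a := pd3 ξ1 p with ha
  set b := pd4 ξ1 p with hb
  set c := pd2 ξ1 p with hc
  -- derivative in v3 at t: b*t + (2*a + b*t)
  have key : ∀ t : ℝ, b * t + (2 * a + b * t) = 0 := by
    intro t
    have h := hv3 p 0 0 t 0 0
    have hfun : (fun s => μ1 ξ1 ξ2 η α33 α11 α12 β1 ξ3 0 0 s 0 0 p)
        = fun s => (2 * a + b * s) * s + β1 p := by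
      funext s
      simp [μ1, ← ha, ← hb]
    rw [hfun] at h
    have hd : HasDerivAt (fun s : ℝ => (2 * a + b * s) * s + β1 p)
        (b * t + (2 * a + b * t)) t := by
      have h1 : HasDerivAt (fun s : ℝ => 2 * a + b * s) b t := by
        simpa using ((hasDerivAt_id t).const_mul b).const_add (2 * a)
      have := (h1.mul (hasDerivAt_id t)).add_const (β1 p)
      simpa [mul_one] using this
    rw [hd.deriv] at h
    exact h
  have ha0 : a = 0 := by have := key 0; linarith
  have hb0 : b = 0 := by have := key 1; linarith
  refine ⟨ha0, hb0, ?_⟩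
  have h := hg p 0 0 0 0 0
  have hfun : (fun s => μ1 ξ1 ξ2 η α33 α11 α12 β1 ξ3 0 0 0 0 s p)
      = fun s => -(c * s) + β1 p := by
    funext s
    simp [μ1, ← hc, ← hb]
  rw [hfun] at h
  have hd : HasDerivAt (fun s : ℝ => -(c * s) + β1 p) (-c) (0:ℝ) := by
    simpa using (((hasDerivAt_id (0:ℝ)).const_mul c).neg).add_const (β1 p)
  rw [hd.deriv] at h
  linarith
end
end

section
/- Let ξ¹, ξ², η, α³³, α¹¹, α¹², α²², β¹, β² : ℝ⁴ → ℝ be smooth functions of (x,y,t,u) and ξ³ : ℝ → ℝ smooth. For (x,y,t,u,v₁,v₂,v₃,f,g) ∈ ℝ⁹ define μ¹ = (η_u + α³³ + 2ξ³'(t) + ξ²_u v₂ − ξ¹_x)f − (ξ¹_y + ξ¹_u v₂)g + α¹¹ v₁ + α¹² v₂ + (2ξ¹_t + ξ¹_u v₃)v₃ + β¹ and μ² = (η_u + α³³ + 2ξ³'(t) + ξ¹_u v₁ − ξ²_y)g − (ξ²_x + ξ²_u v₁)f − α¹² v₁ + α²² v₂ + (2ξ²_t + ξ²_u v₃)v₃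 + β². If both μ¹ and μ² are independent of v₃ (i.e., ∂μ¹/∂v₃ = 0 and ∂μ²/∂v₃ = 0 identically), then ξ¹_t = ξ¹_u = 0 and ξ²_t = ξ²_u = 0 everywhere, i.e., ξ¹ and ξ² depend only on (x,y). -/
/- STATEMENT 5: the determining conditions S¹³ = S²³ = 0 (μ¹ and μ² independent
of v₃) force ξ¹ and ξ² to depend only on (x,y). -/

noncomputable section

/-- μ² = (η_u + α³³ + 2ξ³' + ξ¹_u v₁ − ξ²_y)g − (ξ²_x + ξ²_u v₁)f − α¹²v₁ + α²²v₂
      + (2ξ²_t + ξ²_u v₃)v₃ + β². -/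
def μ2 (ξ1 ξ2 η α33 α12 α22 β2 : ℝ × ℝ × ℝ × ℝ → ℝ) (ξ3 : ℝ → ℝ)
    (v1 v2 v3 f g : ℝ) (p : ℝ × ℝ × ℝ × ℝ) : ℝ :=
  (pd4 η p + α33 p + 2 * deriv ξ3 p.2.2.1 + pd4 ξ1 p * v1 - pd2 ξ2 p) * g
    - (pd1 ξ2 p + pd4 ξ2 p * v1) * f
    - α12 p * v1 + α22 p * v2 + (2 * pd3 ξ2 p + pd4 ξ2 p * v3) * v3 + β2 p

lemma quad_deriv (a b c v : ℝ) :
    deriv (fun s : ℝ => (2 * a + b * s) * s + c) v = 2 * a + 2 * b * v := by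
  have h : HasDerivAt (fun s : ℝ => (2 * a + b * s) * s + c)
      ((0 + b * 1) * v + (2 * a + b * v) * 1) v :=
    (((hasDerivAt_const v (2*a)).add ((hasDerivAt_id v).const_mul b)).mul
      (hasDerivAt_id v)).add_const c
  rw [h.deriv]; ring

lemma quad_zero (a b : ℝ) (h : ∀ v : ℝ, 2 * a + 2 * b * v = 0) : a = 0 ∧ b = 0 := by
  have h0 := h 0
  have h1 := h 1
  constructor <;> linarith

theorem stmt_5
    (ξ1 ξ2 η α33 α11 α12 α22 β1 β2 : ℝ × ℝ × ℝ × ℝ → ℝ) (ξ3 : ℝ → ℝ)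
    (hξ1 : ContDiff ℝ (⊤ : ℕ∞) ξ1) (hξ2 : ContDiff ℝ (⊤ : ℕ∞) ξ2) (hη : ContDiff ℝ (⊤ : ℕ∞) η)
    (hα33 : ContDiff ℝ (⊤ : ℕ∞) α33) (hα11 : ContDiff ℝ (⊤ : ℕ∞) α11) (hα12 : ContDiff ℝ (⊤ : ℕ∞) α12)
    (hα22 : ContDiff ℝ (⊤ : ℕ∞) α22) (hβ1 : ContDiff ℝ (⊤ : ℕ∞) β1) (hβ2 : ContDiff ℝ (⊤ : ℕ∞) β2)
    (hξ3 : ContDiff ℝ (⊤ : ℕ∞) ξ3)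
    -- ∂μ¹/∂v₃ = 0 identically
    (h1 : ∀ (p : ℝ × ℝ × ℝ × ℝ) (v1 v2 v3 f g : ℝ),
      deriv (fun s => μ1 ξ1 ξ2 η α33 α11 α12 β1 ξ3 v1 v2 s f g p) v3 = 0)
    -- ∂μ²/∂v₃ = 0 identically
    (h2 : ∀ (p : ℝ × ℝ × ℝ × ℝ) (v1 v2 v3 f g : ℝ),
      deriv (fun s => μ2 ξ1 ξ2 η α33 α12 α22 β2 ξ3 v1 v2 s f g p) v3 = 0) :
    ∀ p : ℝ × ℝ × ℝ × ℝ,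
      pd3 ξ1 p = 0 ∧ pd4 ξ1 p = 0 ∧ pd3 ξ2 p = 0 ∧ pd4 ξ2 p = 0 := by
  intro p
  have e1 : ∀ v3 : ℝ, 2 * pd3 ξ1 p + 2 * pd4 ξ1 p * v3 = 0 := by
    intro v3
    have h := h1 p 0 0 v3 0 0
    have hf : (fun s => μ1 ξ1 ξ2 η α33 α11 α12 β1 ξ3 0 0 s 0 0 p)
        = fun s : ℝ => (2 * pd3 ξ1 p + pd4 ξ1 p * s) * s + β1 p := by
      funext s; simp only [μ1]; ring
    rw [hf, quad_deriv] at h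
    exact h
  have e2 : ∀ v3 : ℝ, 2 * pd3 ξ2 p + 2 * pd4 ξ2 p * v3 = 0 := by
    intro v3
    have h := h2 p 0 0 v3 0 0
    have hf : (fun s => μ2 ξ1 ξ2 η α33 α12 α22 β2 ξ3 0 0 s 0 0 p)
        = fun s : ℝ => (2 * pd3 ξ2 p + pd4 ξ2 p * s) * s + β2 p := by
      funext s; simp only [μ2]; ring
    rw [hf, quad_deriv] at h
    exact h
  obtain ⟨a1, b1⟩ := quad_zero _ _ e1
  obtain ⟨a2, b2⟩ := quad_zero _ _ e2
  exact ⟨a1, b1, a2, b2⟩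
end
end

section
/- Let η : ℝ⁴ → ℝ be a smooth function of (x,y,t,u) and ξ³ : ℝ → ℝ smooth. Define ζ₃(x,y,t,u,v₃) = η_t(x,y,t,u) + (η_u(x,y,t,u) + ξ³'(t))v₃. If the identity ∂²ζ₃/∂t∂v₃ + v₃ ∂²ζ₃/∂u∂v₃ + ∂ζ₃/∂u = 0 holds for all real (x,y,t,u,v₃), then η_uu = 0 and 2η_ut + ξ³''(t) = 0 everywhere on ℝ⁴. -/
/- STATEMENT 7: the determining condition T³ = 0,
∂²ζ₃/∂t∂v₃ + v₃ ∂²ζ₃/∂u∂v₃ + ∂ζ₃/∂u = 0, for ζ₃ = η_t + (η_u + ξ³'(t))v₃,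
forces η_uu = 0 and 2η_ut + ξ³''(t) = 0. -/

noncomputable section

/-- ζ₃ = η_t + (η_u + ξ³'(t))v₃, as a function of v₃ and p = (x,y,t,u). -/
def ζ3 (ξ3 : ℝ → ℝ) (η : ℝ × ℝ × ℝ × ℝ → ℝ) (v3 : ℝ) (p : ℝ × ℝ × ℝ × ℝ) : ℝ :=
  pd3 η p + (pd4 η p + deriv ξ3 p.2.2.1) * v3

namespace Stmt7Aux

/-- the affine line in the third coordinate -/
lemma hline3 (p : ℝ × ℝ × ℝ × ℝ) (s : ℝ) :
    HasDerivAt (fun s : ℝ => ((p.1, p.2.1, s, p.2.2.2) : ℝ × ℝ × ℝ × ℝ))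
      ((0, 0, 1, 0) : ℝ × ℝ × ℝ × ℝ) s :=
  HasDerivAt.prodMk (hasDerivAt_const _ _) (HasDerivAt.prodMk (hasDerivAt_const _ _)
    (HasDerivAt.prodMk (hasDerivAt_id _) (hasDerivAt_const _ _)))

/-- the affine line in the fourth coordinate -/
lemma hline4 (p : ℝ × ℝ × ℝ × ℝ) (s : ℝ) :
    HasDerivAt (fun s : ℝ => ((p.1, p.2.1, p.2.2.1, s) : ℝ × ℝ × ℝ × ℝ))
      ((0, 0, 0, 1) : ℝ × ℝ × ℝ × ℝ) s :=
  HasDerivAt.prodMk (hasDerivAt_const _ _) (HasDerivAt.prodMk (hasDerivAt_const _ _)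
    (HasDerivAt.prodMk (hasDerivAt_const _ _) (hasDerivAt_id _)))

lemma pd3_eq (f : ℝ × ℝ × ℝ × ℝ → ℝ) (p : ℝ × ℝ × ℝ × ℝ)
    (hf : DifferentiableAt ℝ f p) :
    pd3 f p = fderiv ℝ f p (0, 0, 1, 0) :=
  (hf.hasFDerivAt.comp_hasDerivAt p.2.2.1 (hline3 p p.2.2.1)).deriv

lemma pd4_eq (f : ℝ × ℝ × ℝ × ℝ → ℝ) (p : ℝ × ℝ × ℝ × ℝ)
    (hf : DifferentiableAt ℝ f p) :
    pd4 f p = fderiv ℝ f p (0, 0, 0, 1) :=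
  (hf.hasFDerivAt.comp_hasDerivAt p.2.2.2 (hline4 p p.2.2.2)).deriv

lemma pd3_smooth (f : ℝ × ℝ × ℝ × ℝ → ℝ) (hf : ContDiff ℝ (⊤ : ℕ∞) f) :
    ContDiff ℝ (⊤ : ℕ∞) (pd3 f) := by
  have h : pd3 f = fun q => fderiv ℝ f q (0, 0, 1, 0) :=
    funext fun q => pd3_eq f q ((hf.differentiable (by simp)) q)
  rw [h]
  exact (hf.fderiv_right (by simp)).clm_apply contDiff_const

lemma pd4_smooth (f : ℝ × ℝ × ℝ × ℝ → ℝ) (hf : ContDiff ℝ (⊤ : ℕ∞) f) :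
    ContDiff ℝ (⊤ : ℕ∞) (pd4 f) := by
  have h : pd4 f = fun q => fderiv ℝ f q (0, 0, 0, 1) :=
    funext fun q => pd4_eq f q ((hf.differentiable (by simp)) q)
  rw [h]
  exact (hf.fderiv_right (by simp)).clm_apply contDiff_const

lemma fderiv_apply_const (F : ℝ × ℝ × ℝ × ℝ → ((ℝ × ℝ × ℝ × ℝ) →L[ℝ] ℝ))
    (p : ℝ × ℝ × ℝ × ℝ) (hF : DifferentiableAt ℝ F p) (v w : ℝ × ℝ × ℝ × ℝ) :
    fderiv ℝ (fun q => F q v) p w = (fderiv ℝ F p w) v := by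
  have h : HasFDerivAt (fun q => F q v)
      ((ContinuousLinearMap.apply ℝ ℝ v).comp (fderiv ℝ F p)) p :=
    ((ContinuousLinearMap.apply ℝ ℝ v).hasFDerivAt (x := F p)).comp p hF.hasFDerivAt
  rw [h.fderiv]
  rfl

/-- Clairaut for coordinates 3 and 4. -/
lemma pd34_symm (f : ℝ × ℝ × ℝ × ℝ → ℝ) (hf : ContDiff ℝ (⊤ : ℕ∞) f) (p : ℝ × ℝ × ℝ × ℝ) :
    pd4 (pd3 f) p = pd3 (pd4 f) p := by
  set F := fderiv ℝ f with hFdef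
  have hFd : ContDiff ℝ (⊤ : ℕ∞) F := hf.fderiv_right (by simp)
  have hFdiff : DifferentiableAt ℝ F p := (hFd.differentiable (by simp)) p
  have h3 : pd3 f = fun q => F q (0, 0, 1, 0) :=
    funext fun q => pd3_eq f q ((hf.differentiable (by simp)) q)
  have h4 : pd4 f = fun q => F q (0, 0, 0, 1) :=
    funext fun q => pd4_eq f q ((hf.differentiable (by simp)) q)
  have hd3 : DifferentiableAt ℝ (fun q => F q ((0 : ℝ), (0 : ℝ), (1 : ℝ), (0 : ℝ))) p :=
    ((hFd.clm_apply contDiff_const).differentiable (by simp)) p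
  have hd4 : DifferentiableAt ℝ (fun q => F q ((0 : ℝ), (0 : ℝ), (0 : ℝ), (1 : ℝ))) p :=
    ((hFd.clm_apply contDiff_const).differentiable (by simp)) p
  have hsymm : IsSymmSndFDerivAt ℝ f p :=
    hf.contDiffAt.isSymmSndFDerivAt (by rw [minSmoothness_of_isRCLikeNormedField]; exact le_trans (b := ((2 : ℕ∞) : WithTop ℕ∞)) (by simp) (WithTop.coe_le_coe.2 le_top))
  calc pd4 (pd3 f) p
      = fderiv ℝ (fun q => F q (0, 0, 1, 0)) p (0, 0, 0, 1) := by
        rw [h3]; exact pd4_eq _ p hd3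
    _ = (fderiv ℝ F p (0, 0, 0, 1)) (0, 0, 1, 0) := fderiv_apply_const F p hFdiff _ _
    _ = (fderiv ℝ F p (0, 0, 1, 0)) (0, 0, 0, 1) := hsymm _ _
    _ = fderiv ℝ (fun q => F q (0, 0, 0, 1)) p (0, 0, 1, 0) :=
        (fderiv_apply_const F p hFdiff _ _).symm
    _ = pd3 (pd4 f) p := by rw [h4]; exact (pd3_eq _ p hd4).symm

end Stmt7Aux

open Stmt7Aux in
theorem stmt_7
    (η : ℝ × ℝ × ℝ × ℝ → ℝ) (ξ3 : ℝ → ℝ)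
    (hη : ContDiff ℝ (⊤ : ℕ∞) η) (hξ3 : ContDiff ℝ (⊤ : ℕ∞) ξ3)
    -- ∂²ζ₃/∂t∂v₃ + v₃ ∂²ζ₃/∂u∂v₃ + ∂ζ₃/∂u = 0 identically
    (h : ∀ (p : ℝ × ℝ × ℝ × ℝ) (v3 : ℝ),
      pd3 (fun q => deriv (fun s => ζ3 ξ3 η s q) v3) p
        + v3 * pd4 (fun q => deriv (fun s => ζ3 ξ3 η s q) v3) p
        + pd4 (fun q => ζ3 ξ3 η v3 q) p = 0) :
    ∀ p : ℝ × ℝ × ℝ × ℝ,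
      pd4 (pd4 η) p = 0 ∧ 2 * pd3 (pd4 η) p + deriv (deriv ξ3) p.2.2.1 = 0 := by
  intro p
  have H3 : ContDiff ℝ (⊤ : ℕ∞) (pd3 η) := pd3_smooth η hη
  have H4 : ContDiff ℝ (⊤ : ℕ∞) (pd4 η) := pd4_smooth η hη
  have Hξ : ContDiff ℝ ((⊤ : ℕ∞) : WithTop ℕ∞) (deriv ξ3) := (contDiff_infty_iff_deriv.1 (hξ3.of_le (by simp))).2
  -- Step A : derivative in v3
  have hA : ∀ (v3 : ℝ) (q : ℝ × ℝ × ℝ × ℝ),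
      deriv (fun s => ζ3 ξ3 η s q) v3 = pd4 η q + deriv ξ3 q.2.2.1 := by
    intro v3 q
    have : HasDerivAt (fun s => ζ3 ξ3 η s q) (pd4 η q + deriv ξ3 q.2.2.1) v3 := by
      unfold ζ3
      simpa using
        ((hasDerivAt_id v3).const_mul (pd4 η q + deriv ξ3 q.2.2.1)).const_add (pd3 η q)
    exact this.deriv
  -- differentiability of the partial slices
  have d4line : ∀ q : ℝ × ℝ × ℝ × ℝ,
      DifferentiableAt ℝ (fun s : ℝ => pd4 η (q.1, q.2.1, s, q.2.2.2)) q.2.2.1 :=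
    fun q => ((H4.differentiable (by simp)) _).comp q.2.2.1 (hline3 q q.2.2.1).differentiableAt
  have d4line' : DifferentiableAt ℝ (fun s : ℝ => pd4 η (p.1, p.2.1, p.2.2.1, s)) p.2.2.2 :=
    ((H4.differentiable (by simp)) _).comp p.2.2.2 (hline4 p p.2.2.2).differentiableAt
  have d3line' : DifferentiableAt ℝ (fun s : ℝ => pd3 η (p.1, p.2.1, p.2.2.1, s)) p.2.2.2 :=
    ((H3.differentiable (by simp)) _).comp p.2.2.2 (hline4 p p.2.2.2).differentiableAt
  have dξ : DifferentiableAt ℝ (deriv ξ3) p.2.2.1 := (Hξ.differentiable (by simp)) _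
  -- Step B : pd3 of the v3-derivative
  have hB : ∀ v3 : ℝ, pd3 (fun q => deriv (fun s => ζ3 ξ3 η s q) v3) p
      = pd3 (pd4 η) p + deriv (deriv ξ3) p.2.2.1 := by
    intro v3
    have heq : (fun q => deriv (fun s => ζ3 ξ3 η s q) v3)
        = fun q => pd4 η q + deriv ξ3 q.2.2.1 := funext fun q => hA v3 q
    rw [heq]
    show deriv (fun s => pd4 η (p.1, p.2.1, s, p.2.2.2) + deriv ξ3 s) p.2.2.1
        = pd3 (pd4 η) p + deriv (deriv ξ3) p.2.2.1
    rw [deriv_fun_add (d4line p) dξ]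
    rfl
  -- Step C : pd4 of the v3-derivative
  have hC : ∀ v3 : ℝ, pd4 (fun q => deriv (fun s => ζ3 ξ3 η s q) v3) p
      = pd4 (pd4 η) p := by
    intro v3
    have heq : (fun q => deriv (fun s => ζ3 ξ3 η s q) v3)
        = fun q => pd4 η q + deriv ξ3 q.2.2.1 := funext fun q => hA v3 q
    rw [heq]
    show deriv (fun s => pd4 η (p.1, p.2.1, p.2.2.1, s) + deriv ξ3 p.2.2.1) p.2.2.2
        = pd4 (pd4 η) p
    rw [deriv_add_const]
    rfl
  -- Step D : pd4 of ζ3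
  have hD : ∀ v3 : ℝ, pd4 (fun q => ζ3 ξ3 η v3 q) p
      = pd4 (pd3 η) p + pd4 (pd4 η) p * v3 := by
    intro v3
    show deriv (fun s => pd3 η (p.1, p.2.1, p.2.2.1, s)
        + (pd4 η (p.1, p.2.1, p.2.2.1, s) + deriv ξ3 p.2.2.1) * v3) p.2.2.2
        = pd4 (pd3 η) p + pd4 (pd4 η) p * v3
    rw [deriv_fun_add d3line' ((d4line'.add_const _).mul_const v3),
      deriv_mul_const (d4line'.add_const _), deriv_add_const]
    rfl
  -- symmetry of mixed partials
  have hsym : pd4 (pd3 η) p = pd3 (pd4 η) p := pd34_symm η hη p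
  have h0 := h p 0
  have h1 := h p 1
  rw [hB 0, hC 0, hD 0, hsym] at h0
  rw [hB 1, hC 1, hD 1, hsym] at h1
  constructor <;> linarith
end
end

section
/- Let Ω ⊆ ℝ³ be open, u : Ω → ℝ smooth, m : ℝ → ℝ smooth, ε ∈ ℝ. Define Φ(x,y,t) = (x − ε m(u(x,y,t)), y, t) and suppose Φ is a bijection of Ω onto an open set Ω̄ with smooth inverse, and 1 − ε m'(u) u_x ≠ 0 on Ω. Let F, G, H : Ω → ℝ be smooth with u_tt = F_x + G_y + H on Ω. Set ū = u ∘ Φ⁻¹ and define F̄, Ḡ, H̄ : Ω̄ → ℝ by F̄ ∘ Φ = F − ε m'(u)(G·u_y − u_t²)/(1 − ε m'(u) u_x), Ḡ ∘ Φ = G/(1 − ε m'(u) u_x), H̄ ∘ Φ = H/(1 − ε m'(u) u_x). Then ū_t̄t̄ = F̄_x̄ + Ḡ_ȳ + H̄ on Ω̄, where subscripts x̄, ȳ, t̄ denote partial derivatives with respect to the first, second and third arguments on Ω̄. -/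
/- STATEMENT 10: the point transformation x̄ = x − ε m(u), ȳ = y, t̄ = t keeps the
family of balance-law wave equations u_tt = F_x + G_y + H invariant, with the
transformed flux and source functions
F̄∘Φ = F − ε m'(u)(G u_y − u_t²)/(1 − ε m'(u) u_x), Ḡ∘Φ = G/(1 − ε m'(u) u_x),
H̄∘Φ = H/(1 − ε m'(u) u_x). -/

noncomputable section

/-- Partial derivative with respect to the first variable (x) of a function on ℝ³. -/
def pdx (f : ℝ × ℝ × ℝ → ℝ) (p : ℝ × ℝ × ℝ) : ℝ :=
  deriv (fun s => f (s, p.2.1, p.2.2)) p.1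

/-- Partial derivative with respect to the second variable (y). -/
def pdy (f : ℝ × ℝ × ℝ → ℝ) (p : ℝ × ℝ × ℝ) : ℝ :=
  deriv (fun s => f (p.1, s, p.2.2)) p.2.1

/-- Partial derivative with respect to the third variable (t). -/
def pdt (f : ℝ × ℝ × ℝ → ℝ) (p : ℝ × ℝ × ℝ) : ℝ :=
  deriv (fun s => f (p.1, p.2.1, s)) p.2.2

abbrev E3 := ℝ × ℝ × ℝ

lemma lineX (x y t : ℝ) : HasDerivAt (fun s : ℝ => ((s, y, t) : E3)) ((1,0,0) : E3) x :=
  (hasDerivAt_id x).prodMk ((hasDerivAt_const x y).prodMk (hasDerivAt_const x t))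

lemma lineY (x y t : ℝ) : HasDerivAt (fun s : ℝ => ((x, s, t) : E3)) ((0,1,0) : E3) y :=
  (hasDerivAt_const y x).prodMk ((hasDerivAt_id y).prodMk (hasDerivAt_const y t))

lemma lineT (x y t : ℝ) : HasDerivAt (fun s : ℝ => ((x, y, s) : E3)) ((0,0,1) : E3) t :=
  (hasDerivAt_const t x).prodMk ((hasDerivAt_const t y).prodMk (hasDerivAt_id t))

lemma hasDerivAt_pdx {f : E3 → ℝ} {p : E3} (hf : DifferentiableAt ℝ f p) :
    HasDerivAt (fun s => f (s, p.2.1, p.2.2)) (pdx f p) p.1 := by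
  obtain ⟨x, y, t⟩ := p
  have h : DifferentiableAt ℝ (fun s => f (s, y, t)) x :=
    hf.comp x (lineX x y t).differentiableAt
  exact h.hasDerivAt

lemma hasDerivAt_pdy {f : E3 → ℝ} {p : E3} (hf : DifferentiableAt ℝ f p) :
    HasDerivAt (fun s => f (p.1, s, p.2.2)) (pdy f p) p.2.1 := by
  obtain ⟨x, y, t⟩ := p
  have h : DifferentiableAt ℝ (fun s => f (x, s, t)) y :=
    hf.comp y (lineY x y t).differentiableAt
  exact h.hasDerivAt

lemma hasDerivAt_pdt {f : E3 → ℝ} {p : E3} (hf : DifferentiableAt ℝ f p) :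
    HasDerivAt (fun s => f (p.1, p.2.1, s)) (pdt f p) p.2.2 := by
  obtain ⟨x, y, t⟩ := p
  have h : DifferentiableAt ℝ (fun s => f (x, y, s)) t :=
    hf.comp t (lineT x y t).differentiableAt
  exact h.hasDerivAt

lemma pdx_eq_fderiv {f : E3 → ℝ} {p : E3} (hf : DifferentiableAt ℝ f p) :
    pdx f p = fderiv ℝ f p (1,0,0) := by
  obtain ⟨x, y, t⟩ := p
  exact ((hf.hasFDerivAt.comp_hasDerivAt x (lineX x y t)).unique (hasDerivAt_pdx hf)).symm

lemma pdy_eq_fderiv {f : E3 → ℝ} {p : E3} (hf : DifferentiableAt ℝ f p) :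
    pdy f p = fderiv ℝ f p (0,1,0) := by
  obtain ⟨x, y, t⟩ := p
  exact ((hf.hasFDerivAt.comp_hasDerivAt y (lineY x y t)).unique (hasDerivAt_pdy hf)).symm

lemma pdt_eq_fderiv {f : E3 → ℝ} {p : E3} (hf : DifferentiableAt ℝ f p) :
    pdt f p = fderiv ℝ f p (0,0,1) := by
  obtain ⟨x, y, t⟩ := p
  exact ((hf.hasFDerivAt.comp_hasDerivAt t (lineT x y t)).unique (hasDerivAt_pdt hf)).symm

lemma pdx_congr {f g : E3 → ℝ} {p : E3} (h : f =ᶠ[nhds p] g) : pdx f p = pdx g p := by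
  obtain ⟨x, y, t⟩ := p
  exact Filter.EventuallyEq.deriv_eq
    (h.comp_tendsto ((lineX x y t).continuousAt : ContinuousAt _ x))

lemma pdy_congr {f g : E3 → ℝ} {p : E3} (h : f =ᶠ[nhds p] g) : pdy f p = pdy g p := by
  obtain ⟨x, y, t⟩ := p
  exact Filter.EventuallyEq.deriv_eq
    (h.comp_tendsto ((lineY x y t).continuousAt : ContinuousAt _ y))

lemma pdt_congr {f g : E3 → ℝ} {p : E3} (h : f =ᶠ[nhds p] g) : pdt f p = pdt g p := by
  obtain ⟨x, y, t⟩ := p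
  exact Filter.EventuallyEq.deriv_eq
    (h.comp_tendsto ((lineT x y t).continuousAt : ContinuousAt _ t))

lemma pdx_clm {f : E3 → ℝ} {p : E3} (hfd : DifferentiableAt ℝ (fderiv ℝ f) p) (w : E3) :
    pdx (fun r => fderiv ℝ f r w) p = fderiv ℝ (fderiv ℝ f) p (1,0,0) w := by
  obtain ⟨x, y, t⟩ := p
  have h1 : HasDerivAt (fun s => fderiv ℝ f (s, y, t))
      (fderiv ℝ (fderiv ℝ f) (x,y,t) (1,0,0)) x :=
    hfd.hasFDerivAt.comp_hasDerivAt x (lineX x y t)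
  exact ((ContinuousLinearMap.apply ℝ ℝ w).hasFDerivAt.comp_hasDerivAt x h1).deriv

lemma pdy_clm {f : E3 → ℝ} {p : E3} (hfd : DifferentiableAt ℝ (fderiv ℝ f) p) (w : E3) :
    pdy (fun r => fderiv ℝ f r w) p = fderiv ℝ (fderiv ℝ f) p (0,1,0) w := by
  obtain ⟨x, y, t⟩ := p
  have h1 : HasDerivAt (fun s => fderiv ℝ f (x, s, t))
      (fderiv ℝ (fderiv ℝ f) (x,y,t) (0,1,0)) y :=
    hfd.hasFDerivAt.comp_hasDerivAt y (lineY x y t)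
  exact ((ContinuousLinearMap.apply ℝ ℝ w).hasFDerivAt.comp_hasDerivAt y h1).deriv

lemma pdt_clm {f : E3 → ℝ} {p : E3} (hfd : DifferentiableAt ℝ (fderiv ℝ f) p) (w : E3) :
    pdt (fun r => fderiv ℝ f r w) p = fderiv ℝ (fderiv ℝ f) p (0,0,1) w := by
  obtain ⟨x, y, t⟩ := p
  have h1 : HasDerivAt (fun s => fderiv ℝ f (x, y, s))
      (fderiv ℝ (fderiv ℝ f) (x,y,t) (0,0,1)) t :=
    hfd.hasFDerivAt.comp_hasDerivAt t (lineT x y t)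
  exact ((ContinuousLinearMap.apply ℝ ℝ w).hasFDerivAt.comp_hasDerivAt t h1).deriv

/-- Chain rule for the point transformation Φ p = (p.1 - ε m(u p), p.2.1, p.2.2). -/
lemma chain_pd (u : E3 → ℝ) (m : ℝ → ℝ) (ε : ℝ) (Φ : E3 → E3)
    (hΦ : ∀ p : E3, Φ p = (p.1 - ε * m (u p), p.2.1, p.2.2))
    (hm : Differentiable ℝ m)
    {p : E3} (hup : DifferentiableAt ℝ u p)
    {Ab A : E3 → ℝ} (hAb : DifferentiableAt ℝ Ab (Φ p))
    (hA : A =ᶠ[nhds p] fun r => Ab (Φ r)) :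
    pdx A p = pdx Ab (Φ p) * (1 - ε * deriv m (u p) * pdx u p) ∧
    pdy A p = pdy Ab (Φ p) - pdx Ab (Φ p) * (ε * deriv m (u p) * pdy u p) ∧
    pdt A p = pdt Ab (Φ p) - pdx Ab (Φ p) * (ε * deriv m (u p) * pdt u p) := by
  obtain ⟨x, y, t⟩ := p
  set q : E3 := Φ (x, y, t) with hq
  have hqe : q = (x - ε * m (u (x, y, t)), y, t) := hΦ _
  -- derivative of the first component along each slice
  have hmx : HasDerivAt (fun s => ε * m (u (s, y, t)))
      (ε * (deriv m (u (x, y, t)) * pdx u (x, y, t))) x :=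
    (((hm (u (x,y,t))).hasDerivAt.comp x (hasDerivAt_pdx hup))).const_mul ε
  have hmy : HasDerivAt (fun s => ε * m (u (x, s, t)))
      (ε * (deriv m (u (x, y, t)) * pdy u (x, y, t))) y :=
    (((hm (u (x,y,t))).hasDerivAt.comp y (hasDerivAt_pdy hup))).const_mul ε
  have hmt : HasDerivAt (fun s => ε * m (u (x, y, s)))
      (ε * (deriv m (u (x, y, t)) * pdt u (x, y, t))) t :=
    (((hm (u (x,y,t))).hasDerivAt.comp t (hasDerivAt_pdt hup))).const_mul ε
  -- slice maps through Φ
  have hσx : HasDerivAt (fun s => Φ (s, y, t))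
      ((1 - ε * (deriv m (u (x,y,t)) * pdx u (x,y,t)), 0, 0) : E3) x := by
    have : HasDerivAt (fun s : ℝ => ((s - ε * m (u (s, y, t)), y, t) : E3))
        ((1 - ε * (deriv m (u (x,y,t)) * pdx u (x,y,t)), 0, 0) : E3) x :=
      ((hasDerivAt_id x).sub hmx).prodMk ((hasDerivAt_const x y).prodMk (hasDerivAt_const x t))
    exact this.congr_of_eventuallyEq (Filter.Eventually.of_forall fun s => (hΦ _))
  have hσy : HasDerivAt (fun s => Φ (x, s, t))
      ((-(ε * (deriv m (u (x,y,t)) * pdy u (x,y,t))), 1, 0) : E3) y := by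
    have : HasDerivAt (fun s : ℝ => ((x - ε * m (u (x, s, t)), s, t) : E3))
        ((-(ε * (deriv m (u (x,y,t)) * pdy u (x,y,t))), 1, 0) : E3) y := by
      have h1 : HasDerivAt (fun s : ℝ => x - ε * m (u (x, s, t)))
          (-(ε * (deriv m (u (x,y,t)) * pdy u (x,y,t)))) y := by
        simpa using hmy.const_sub x
      exact h1.prodMk ((hasDerivAt_id y).prodMk (hasDerivAt_const y t))
    exact this.congr_of_eventuallyEq (Filter.Eventually.of_forall fun s => (hΦ _))
  have hσt : HasDerivAt (fun s => Φ (x, y, s))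
      ((-(ε * (deriv m (u (x,y,t)) * pdt u (x,y,t))), 0, 1) : E3) t := by
    have : HasDerivAt (fun s : ℝ => ((x - ε * m (u (x, y, s)), y, s) : E3))
        ((-(ε * (deriv m (u (x,y,t)) * pdt u (x,y,t))), 0, 1) : E3) t := by
      have h1 : HasDerivAt (fun s : ℝ => x - ε * m (u (x, y, s)))
          (-(ε * (deriv m (u (x,y,t)) * pdt u (x,y,t)))) t := by
        simpa using hmt.const_sub x
      exact h1.prodMk ((hasDerivAt_const t y).prodMk (hasDerivAt_id t))
    exact this.congr_of_eventuallyEq (Filter.Eventually.of_forall fun s => (hΦ _))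
  -- fderiv of Ab applied to those vectors
  have hfx : fderiv ℝ Ab q ((1 - ε * (deriv m (u (x,y,t)) * pdx u (x,y,t)), 0, 0) : E3)
      = pdx Ab q * (1 - ε * deriv m (u (x,y,t)) * pdx u (x,y,t)) := by
    have hv : ((1 - ε * (deriv m (u (x,y,t)) * pdx u (x,y,t)), 0, 0) : E3)
        = (1 - ε * deriv m (u (x,y,t)) * pdx u (x,y,t)) • ((1,0,0) : E3) := by
      simp [Prod.smul_def, smul_eq_mul, mul_assoc]
    rw [hv, (fderiv ℝ Ab q).map_smul, smul_eq_mul, ← pdx_eq_fderiv hAb, mul_comm]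
  have hfy : fderiv ℝ Ab q ((-(ε * (deriv m (u (x,y,t)) * pdy u (x,y,t))), 1, 0) : E3)
      = pdy Ab q - pdx Ab q * (ε * deriv m (u (x,y,t)) * pdy u (x,y,t)) := by
    have hv : ((-(ε * (deriv m (u (x,y,t)) * pdy u (x,y,t))), 1, 0) : E3)
        = ((0,1,0) : E3) - (ε * deriv m (u (x,y,t)) * pdy u (x,y,t)) • ((1,0,0) : E3) := by
      simp [Prod.smul_def, smul_eq_mul, mul_assoc]
    rw [hv, map_sub, (fderiv ℝ Ab q).map_smul, smul_eq_mul, ← pdx_eq_fderiv hAb,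
      ← pdy_eq_fderiv hAb, mul_comm]
  have hft : fderiv ℝ Ab q ((-(ε * (deriv m (u (x,y,t)) * pdt u (x,y,t))), 0, 1) : E3)
      = pdt Ab q - pdx Ab q * (ε * deriv m (u (x,y,t)) * pdt u (x,y,t)) := by
    have hv : ((-(ε * (deriv m (u (x,y,t)) * pdt u (x,y,t))), 0, 1) : E3)
        = ((0,0,1) : E3) - (ε * deriv m (u (x,y,t)) * pdt u (x,y,t)) • ((1,0,0) : E3) := by
      simp [Prod.smul_def, smul_eq_mul, mul_assoc]
    rw [hv, map_sub, (fderiv ℝ Ab q).map_smul, smul_eq_mul, ← pdx_eq_fderiv hAb,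
      ← pdt_eq_fderiv hAb, mul_comm]
  refine ⟨?_, ?_, ?_⟩
  · have h1 : pdx A (x,y,t) = pdx (fun r => Ab (Φ r)) (x,y,t) := pdx_congr hA
    have h2 : HasDerivAt (fun s => Ab (Φ (s, y, t)))
        (fderiv ℝ Ab q ((1 - ε * (deriv m (u (x,y,t)) * pdx u (x,y,t)), 0, 0) : E3)) x :=
      hAb.hasFDerivAt.comp_hasDerivAt x hσx
    rw [h1]; rw [show pdx (fun r => Ab (Φ r)) (x,y,t) = _ from h2.deriv, hfx]
  · have h1 : pdy A (x,y,t) = pdy (fun r => Ab (Φ r)) (x,y,t) := pdy_congr hA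
    have h2 : HasDerivAt (fun s => Ab (Φ (x, s, t)))
        (fderiv ℝ Ab q ((-(ε * (deriv m (u (x,y,t)) * pdy u (x,y,t))), 1, 0) : E3)) y :=
      hAb.hasFDerivAt.comp_hasDerivAt y hσy
    rw [h1]; rw [show pdy (fun r => Ab (Φ r)) (x,y,t) = _ from h2.deriv, hfy]
  · have h1 : pdt A (x,y,t) = pdt (fun r => Ab (Φ r)) (x,y,t) := pdt_congr hA
    have h2 : HasDerivAt (fun s => Ab (Φ (x, y, s)))
        (fderiv ℝ Ab q ((-(ε * (deriv m (u (x,y,t)) * pdt u (x,y,t))), 0, 1) : E3)) t :=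
      hAb.hasFDerivAt.comp_hasDerivAt t hσt
    rw [h1]; rw [show pdt (fun r => Ab (Φ r)) (x,y,t) = _ from h2.deriv, hft]


open scoped ContDiff

theorem stmt_10
    (Ω Ωb : Set (ℝ × ℝ × ℝ)) (hΩ : IsOpen Ω) (hΩb : IsOpen Ωb)
    (u : ℝ × ℝ × ℝ → ℝ) (hu : ContDiffOn ℝ (⊤ : ℕ∞) u Ω)
    (m : ℝ → ℝ) (hm : ContDiff ℝ (⊤ : ℕ∞) m) (ε : ℝ)
    (Φ Ψ : ℝ × ℝ × ℝ → ℝ × ℝ × ℝ)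
    (hΦ : ∀ p : ℝ × ℝ × ℝ, Φ p = (p.1 - ε * m (u p), p.2.1, p.2.2))
    (himage : Φ '' Ω = Ωb)
    (hΨ : ContDiffOn ℝ (⊤ : ℕ∞) Ψ Ωb)
    (hleft : ∀ p ∈ Ω, Ψ (Φ p) = p)
    (hright : ∀ q ∈ Ωb, Φ (Ψ q) = q)
    (hD : ∀ p ∈ Ω, 1 - ε * deriv m (u p) * pdx u p ≠ 0)
    (F G H : ℝ × ℝ × ℝ → ℝ)
    (hF : ContDiffOn ℝ (⊤ : ℕ∞) F Ω) (hG : ContDiffOn ℝ (⊤ : ℕ∞) G Ω) (hH : ContDiffOn ℝ (⊤ : ℕ∞) H Ω)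
    -- u solves u_tt = F_x + G_y + H on Ω
    (hwave : ∀ p ∈ Ω, pdt (pdt u) p = pdx F p + pdy G p + H p)
    (Fb Gb Hb : ℝ × ℝ × ℝ → ℝ)
    -- F̄ ∘ Φ = F − ε m'(u)(G·u_y − u_t²)/(1 − ε m'(u) u_x)
    (hFb : ∀ p ∈ Ω, Fb (Φ p) =
      F p - ε * deriv m (u p) * (G p * pdy u p - (pdt u p) ^ 2)
              / (1 - ε * deriv m (u p) * pdx u p))
    -- Ḡ ∘ Φ = G/(1 − ε m'(u) u_x)
    (hGb : ∀ p ∈ Ω, Gb (Φ p) = G p / (1 - ε * deriv m (u p) * pdx u p))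
    -- H̄ ∘ Φ = H/(1 − ε m'(u) u_x)
    (hHb : ∀ p ∈ Ω, Hb (Φ p) = H p / (1 - ε * deriv m (u p) * pdx u p)) :
    -- then ū = u ∘ Ψ solves ū_t̄t̄ = F̄_x̄ + Ḡ_ȳ + H̄ on Ωb
    ∀ q ∈ Ωb,
      pdt (pdt (fun r => u (Ψ r))) q = pdx Fb q + pdy Gb q + Hb q := by
  intro q₀ hq₀
  have hmd : Differentiable ℝ m := hm.differentiable (by simp)
  have hΨmem : ∀ q ∈ Ωb, Ψ q ∈ Ω := by
    intro q hq
    rw [← himage] at hq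
    obtain ⟨p, hp, rfl⟩ := hq
    rw [hleft p hp]; exact hp
  set p₀ := Ψ q₀ with hp₀def
  have hp₀ : p₀ ∈ Ω := hΨmem q₀ hq₀
  have hΦp₀ : Φ p₀ = q₀ := hright q₀ hq₀
  -- differentiability helpers
  have hΩn : Ω ∈ nhds p₀ := hΩ.mem_nhds hp₀
  have dAt : ∀ (f : E3 → ℝ), ContDiffOn ℝ (⊤ : ℕ∞) f Ω → ∀ p ∈ Ω, DifferentiableAt ℝ f p :=
    fun f hf p hp => ((hf.contDiffAt (hΩ.mem_nhds hp)).differentiableAt (by simp))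
  have hud : ∀ p ∈ Ω, DifferentiableAt ℝ u p := dAt u hu
  -- derivative functions (fderiv versions, smooth)
  have hfd : ContDiffOn ℝ ∞ (fderiv ℝ u) Ω := (hu.fderiv_of_isOpen hΩ (m := ∞) (by simp)).of_le (by simp)
  set uxf : E3 → ℝ := fun p => fderiv ℝ u p (1,0,0) with huxf_def
  set uyf : E3 → ℝ := fun p => fderiv ℝ u p (0,1,0) with huyf_def
  set utf : E3 → ℝ := fun p => fderiv ℝ u p (0,0,1) with hutf_def
  have huxf : ContDiffOn ℝ ∞ uxf Ω := hfd.clm_apply contDiffOn_const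
  have huyf : ContDiffOn ℝ ∞ uyf Ω := hfd.clm_apply contDiffOn_const
  have hutf : ContDiffOn ℝ ∞ utf Ω := hfd.clm_apply contDiffOn_const
  have hux_eq : ∀ p ∈ Ω, pdx u p = uxf p := fun p hp => pdx_eq_fderiv (hud p hp)
  have huy_eq : ∀ p ∈ Ω, pdy u p = uyf p := fun p hp => pdy_eq_fderiv (hud p hp)
  have hut_eq : ∀ p ∈ Ω, pdt u p = utf p := fun p hp => pdt_eq_fderiv (hud p hp)
  have hux : ContDiffOn ℝ ∞ (pdx u) Ω := huxf.congr fun p hp => hux_eq p hp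
  have huy : ContDiffOn ℝ ∞ (pdy u) Ω := huyf.congr fun p hp => huy_eq p hp
  have hut : ContDiffOn ℝ ∞ (pdt u) Ω := hutf.congr fun p hp => hut_eq p hp
  have dAt' : ∀ (f : E3 → ℝ), ContDiffOn ℝ ∞ f Ω → ∀ p ∈ Ω, DifferentiableAt ℝ f p :=
    fun f hf p hp => ((hf.contDiffAt (hΩ.mem_nhds hp)).differentiableAt (by norm_num))
  -- m' and the denominator
  have hm' : ContDiff ℝ ∞ (deriv m) := (contDiff_infty_iff_deriv.mp (hm.of_le (by simp))).2
  have hm'' : ContDiff ℝ ∞ (deriv (deriv m)) := (contDiff_infty_iff_deriv.mp hm').2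
  set M' : E3 → ℝ := fun p => deriv m (u p) with hM'_def
  have hM' : ContDiffOn ℝ ∞ M' Ω := hm'.comp_contDiffOn (hu.of_le (by simp))
  set Df : E3 → ℝ := fun p => 1 - ε * M' p * pdx u p with hDf_def
  have hDf : ContDiffOn ℝ ∞ Df Ω :=
    contDiffOn_const.sub ((contDiffOn_const.mul hM').mul hux)
  have hDfne : ∀ p ∈ Ω, Df p ≠ 0 := fun p hp => hD p hp
  -- the function v = u_t / D on Ω
  set v : E3 → ℝ := fun p => pdt u p / Df p with hv_def
  have hv : ContDiffOn ℝ ∞ v Ω := hut.div hDf hDfne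
  -- ubar and w
  set ubar : E3 → ℝ := fun r => u (Ψ r) with hubar_def
  have hub : ContDiffOn ℝ ∞ ubar Ωb := (hu.of_le (by simp)).comp (hΨ.of_le (by simp)) hΨmem
  set w : E3 → ℝ := fun q => v (Ψ q) with hw_def
  have hwc : ContDiffOn ℝ ∞ w Ωb := hv.comp (hΨ.of_le (by simp)) hΨmem
  -- Claim 1: pdt ubar = w on Ωb
  have hclaim1 : ∀ q ∈ Ωb, pdt ubar q = w q := by
    intro q hq
    have hp : Ψ q ∈ Ω := hΨmem q hq
    have hΦp : Φ (Ψ q) = q := hright q hq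
    have hAb : DifferentiableAt ℝ ubar (Φ (Ψ q)) := by
      rw [hΦp]
      exact (hub.contDiffAt (hΩb.mem_nhds hq)).differentiableAt (by norm_num)
    have hA : u =ᶠ[nhds (Ψ q)] fun r => ubar (Φ r) := by
      filter_upwards [hΩ.mem_nhds hp] with r hr
      simp only [hubar_def, hleft r hr]
    obtain ⟨hx, -, ht⟩ := chain_pd u m ε Φ hΦ hmd (hud _ hp) hAb hA
    rw [hΦp] at hx ht
    rw [hw_def]
    show pdt ubar q = pdt u (Ψ q) / Df (Ψ q)
    rw [eq_div_iff (hDfne _ hp), hDf_def]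
    have h1 : pdt ubar q = pdt u (Ψ q) + pdx ubar q * (ε * deriv m (u (Ψ q)) * pdt u (Ψ q)) := by
      linear_combination -ht
    rw [h1]
    have h2 : pdx ubar q * (1 - ε * deriv m (u (Ψ q)) * pdx u (Ψ q)) = pdx u (Ψ q) := hx.symm
    simp only [hM'_def]
    linear_combination (ε * deriv m (u (Ψ q)) * pdt u (Ψ q)) * h2
  -- pointwise differentiability at p₀
  have hD0 : Df p₀ ≠ 0 := hDfne p₀ hp₀
  have dΨ : DifferentiableAt ℝ Ψ q₀ := (hΨ.contDiffAt (hΩb.mem_nhds hq₀)).differentiableAt (by simp)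
  have dut : DifferentiableAt ℝ (pdt u) p₀ := dAt' _ hut p₀ hp₀
  have dux : DifferentiableAt ℝ (pdx u) p₀ := dAt' _ hux p₀ hp₀
  have duy : DifferentiableAt ℝ (pdy u) p₀ := dAt' _ huy p₀ hp₀
  have dM' : DifferentiableAt ℝ M' p₀ := dAt' _ hM' p₀ hp₀
  have dDf : DifferentiableAt ℝ Df p₀ := dAt' _ hDf p₀ hp₀
  have dG : DifferentiableAt ℝ G p₀ := dAt G hG p₀ hp₀
  have dF : DifferentiableAt ℝ F p₀ := dAt F hF p₀ hp₀
  -- Claim 2 : chain rule for w = v ∘ Ψ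
  have hAb2 : DifferentiableAt ℝ w (Φ p₀) := by
    rw [hΦp₀]
    exact (hwc.contDiffAt (hΩb.mem_nhds hq₀)).differentiableAt (by norm_num)
  have hA2 : v =ᶠ[nhds p₀] fun r => w (Φ r) := by
    filter_upwards [hΩn] with r hr
    simp only [hw_def, hleft r hr]
  obtain ⟨hx2, -, ht2⟩ := chain_pd u m ε Φ hΦ hmd (hud p₀ hp₀) hAb2 hA2
  rw [hΦp₀] at hx2 ht2
  have hx2' : pdx v p₀ = pdx w q₀ * Df p₀ := hx2
  have ht2' : pdt v p₀ = pdt w q₀ - pdx w q₀ * (ε * M' p₀ * pdt u p₀) := ht2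
  have hgoalL : pdt (pdt ubar) q₀ = pdt w q₀ := by
    apply pdt_congr
    filter_upwards [hΩb.mem_nhds hq₀] with r hr
    exact hclaim1 r hr
  -- Claim 3 : Fb
  set Aex : E3 → ℝ := fun p => F p - ε * M' p * (G p * pdy u p - pdt u p ^ 2) / Df p
    with hAex_def
  have hAexc : ContDiffOn ℝ ∞ Aex Ω :=
    (hF.of_le (by simp)).sub (((contDiffOn_const.mul hM').mul
      (((hG.of_le (by simp)).mul huy).sub (hut.pow 2))).div hDf hDfne)
  have hAexΦ : ∀ p ∈ Ω, Fb (Φ p) = Aex p := fun p hp => hFb p hp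
  have dFb : DifferentiableAt ℝ Fb q₀ := by
    have hev : Fb =ᶠ[nhds q₀] fun q => Aex (Ψ q) := by
      filter_upwards [hΩb.mem_nhds hq₀] with r hr
      calc Fb r = Fb (Φ (Ψ r)) := by rw [hright r hr]
        _ = Aex (Ψ r) := hAexΦ _ (hΨmem r hr)
    exact hev.differentiableAt_iff.mpr ((dAt' _ hAexc p₀ hp₀).comp q₀ dΨ)
  have hA3 : Aex =ᶠ[nhds p₀] fun r => Fb (Φ r) := by
    filter_upwards [hΩn] with r hr
    exact (hAexΦ r hr).symm
  obtain ⟨hx3, -, -⟩ := chain_pd u m ε Φ hΦ hmd (hud p₀ hp₀) (by rw [hΦp₀]; exact dFb) hA3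
  rw [hΦp₀] at hx3
  have hx3' : pdx Aex p₀ = pdx Fb q₀ * Df p₀ := hx3
  -- Claim 4 : Gb
  set Bex : E3 → ℝ := fun p => G p / Df p with hBex_def
  have hBexc : ContDiffOn ℝ ∞ Bex Ω := (hG.of_le (by simp)).div hDf hDfne
  have hBexΦ : ∀ p ∈ Ω, Gb (Φ p) = Bex p := fun p hp => hGb p hp
  have dGb : DifferentiableAt ℝ Gb q₀ := by
    have hev : Gb =ᶠ[nhds q₀] fun q => Bex (Ψ q) := by
      filter_upwards [hΩb.mem_nhds hq₀] with r hr
      calc Gb r = Gb (Φ (Ψ r)) := by rw [hright r hr]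
        _ = Bex (Ψ r) := hBexΦ _ (hΨmem r hr)
    exact hev.differentiableAt_iff.mpr ((dAt' _ hBexc p₀ hp₀).comp q₀ dΨ)
  have hA4 : Bex =ᶠ[nhds p₀] fun r => Gb (Φ r) := by
    filter_upwards [hΩn] with r hr
    exact (hBexΦ r hr).symm
  obtain ⟨hx4, hy4, -⟩ := chain_pd u m ε Φ hΦ hmd (hud p₀ hp₀) (by rw [hΦp₀]; exact dGb) hA4
  rw [hΦp₀] at hx4 hy4
  have hx4' : pdx Bex p₀ = pdx Gb q₀ * Df p₀ := hx4
  have hy4' : pdy Bex p₀ = pdy Gb q₀ - pdx Gb q₀ * (ε * M' p₀ * pdy u p₀) := hy4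
  -- Claim 5 : Hb
  have hHbv : Hb q₀ = H p₀ / Df p₀ := by rw [← hΦp₀]; exact hHb p₀ hp₀
  -- solve for the bar-side derivatives
  have hFbx : pdx Fb q₀ = pdx Aex p₀ / Df p₀ := by
    rw [eq_div_iff hD0]; exact hx3'.symm
  have hGbx : pdx Gb q₀ = pdx Bex p₀ / Df p₀ := by
    rw [eq_div_iff hD0]; exact hx4'.symm
  have hGby : pdy Gb q₀ = pdy Bex p₀ + pdx Gb q₀ * (ε * M' p₀ * pdy u p₀) := by
    linear_combination -hy4'
  have hwx : pdx w q₀ = pdx v p₀ / Df p₀ := by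
    rw [eq_div_iff hD0]; exact hx2'.symm
  have hwt : pdt w q₀ = pdt v p₀ + pdx w q₀ * (ε * M' p₀ * pdt u p₀) := by
    linear_combination -ht2'
  -- second derivatives via the symmetric second fderiv
  have dfd : DifferentiableAt ℝ (fderiv ℝ u) p₀ :=
    (hfd.contDiffAt hΩn).differentiableAt (by norm_num)
  set f₂ := fderiv ℝ (fderiv ℝ u) p₀ with hf₂_def
  have hsym : ∀ vv ww, f₂ vv ww = f₂ ww vv :=
    fun vv ww => (hu.contDiffAt hΩn).isSymmSndFDerivAt (by rw [minSmoothness_of_isRCLikeNormedField]; exact WithTop.coe_le_coe.mpr le_top) vv ww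
  have hev_x : pdx u =ᶠ[nhds p₀] uxf := by
    filter_upwards [hΩn] with r hr; exact hux_eq r hr
  have hev_y : pdy u =ᶠ[nhds p₀] uyf := by
    filter_upwards [hΩn] with r hr; exact huy_eq r hr
  have hev_t : pdt u =ᶠ[nhds p₀] utf := by
    filter_upwards [hΩn] with r hr; exact hut_eq r hr
  have E_tx : pdx (pdt u) p₀ = f₂ (1,0,0) (0,0,1) :=
    (pdx_congr hev_t).trans (pdx_clm dfd _)
  have E_xx : pdx (pdx u) p₀ = f₂ (1,0,0) (1,0,0) :=
    (pdx_congr hev_x).trans (pdx_clm dfd _)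
  have E_xt : pdt (pdx u) p₀ = f₂ (1,0,0) (0,0,1) :=
    ((pdt_congr hev_x).trans (pdt_clm dfd _)).trans (hsym _ _)
  have E_xy : pdy (pdx u) p₀ = f₂ (1,0,0) (0,1,0) :=
    ((pdy_congr hev_x).trans (pdy_clm dfd _)).trans (hsym _ _)
  have E_yx : pdx (pdy u) p₀ = f₂ (1,0,0) (0,1,0) :=
    (pdx_congr hev_y).trans (pdx_clm dfd _)
  -- first derivatives of M'
  have dm'' : HasDerivAt (deriv m) (deriv (deriv m) (u p₀)) (u p₀) :=
    ((hm'.differentiable (by norm_num)) (u p₀)).hasDerivAt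
  have E_Mx : pdx M' p₀ = deriv (deriv m) (u p₀) * pdx u p₀ :=
    by have := HasDerivAt.comp p₀.1 dm'' (hasDerivAt_pdx (hud p₀ hp₀)); exact this.deriv
  have E_My : pdy M' p₀ = deriv (deriv m) (u p₀) * pdy u p₀ :=
    by have := HasDerivAt.comp p₀.2.1 dm'' (hasDerivAt_pdy (hud p₀ hp₀)); exact this.deriv
  have E_Mt : pdt M' p₀ = deriv (deriv m) (u p₀) * pdt u p₀ :=
    by have := HasDerivAt.comp p₀.2.2 dm'' (hasDerivAt_pdt (hud p₀ hp₀)); exact this.deriv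
  -- first derivatives of Df
  have E_Dfx : pdx Df p₀ = _ :=
    ((hasDerivAt_const p₀.1 (1:ℝ)).sub
      (((hasDerivAt_pdx dM').const_mul ε).mul (hasDerivAt_pdx dux))).deriv
  have E_Dfy : pdy Df p₀ = _ :=
    ((hasDerivAt_const p₀.2.1 (1:ℝ)).sub
      (((hasDerivAt_pdy dM').const_mul ε).mul (hasDerivAt_pdy dux))).deriv
  have E_Dft : pdt Df p₀ = _ :=
    ((hasDerivAt_const p₀.2.2 (1:ℝ)).sub
      (((hasDerivAt_pdt dM').const_mul ε).mul (hasDerivAt_pdt dux))).deriv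
  -- derivatives of v
  have E_vx : pdx v p₀ = _ :=
    ((hasDerivAt_pdx dut).div (hasDerivAt_pdx dDf) hD0).deriv
  have E_vt : pdt v p₀ = _ :=
    ((hasDerivAt_pdt dut).div (hasDerivAt_pdt dDf) hD0).deriv
  -- derivatives of Bex
  have E_Bx : pdx Bex p₀ = _ :=
    ((hasDerivAt_pdx dG).div (hasDerivAt_pdx dDf) hD0).deriv
  have E_By : pdy Bex p₀ = _ :=
    ((hasDerivAt_pdy dG).div (hasDerivAt_pdy dDf) hD0).deriv
  -- derivative of Aex
  have E_Ax : pdx Aex p₀ = _ :=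
    ((hasDerivAt_pdx dF).sub ((((hasDerivAt_pdx dM').const_mul ε).mul
      (((hasDerivAt_pdx dG).mul (hasDerivAt_pdx duy)).sub
        ((hasDerivAt_pdx dut).pow 2))).div (hasDerivAt_pdx dDf) hD0)).deriv
  -- assemble
  rw [hgoalL, hwt, hwx, hFbx, hGby, hGbx, hHbv, E_vt, E_vx, E_Ax, E_Bx, E_By,
    E_Dfx, E_Dfy, E_Dft, E_Mx, E_My, E_Mt, hwave p₀ hp₀, E_tx, E_xx, E_xt, E_xy, E_yx]
  have hD0' : 1 - ε * M' p₀ * pdx u p₀ ≠ 0 := hD0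
  simp only [Pi.mul_apply, Pi.sub_apply, Pi.pow_apply, Prod.mk.eta, hDf_def]
  field_simp
  ring
end
end

section
/- Let m, ψ, φ : ℝ → ℝ be smooth, ε ∈ ℝ, Ω ⊆ ℝ³ open, and let u : Ω → ℝ be a smooth function satisfying the implicit relation u(x,y,t) = ψ(y)(t − x − ε m(u(x,y,t))) + φ(y)(t + x + ε m(u(x,y,t))) for all (x,y,t) ∈ Ω, and suppose 1 + ε m'(u) u_x ≠ 0 everywhere on Ω. Then u satisfies the nonlinear wave equation ∂/∂x [ (ε m'(u) u_t² + u_x) / (1 + ε m'(u) u_x) ] = u_tt on Ω. -/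
/- STATEMENT 12: any smooth u satisfying the implicit relation
u = ψ(y)(t − x − ε m(u)) + φ(y)(t + x + ε m(u)), with 1 + ε m'(u)u_x ≠ 0,
solves the nonlinear wave equation ∂/∂x[(ε m'(u)u_t² + u_x)/(1 + ε m'(u)u_x)] = u_tt. -/

noncomputable section

lemma aux_pdx (m ψ φ : ℝ → ℝ) (hm : Differentiable ℝ m) (ε : ℝ)
    (Ω : Set (ℝ × ℝ × ℝ)) (hΩ : IsOpen Ω)
    (u : ℝ × ℝ × ℝ → ℝ) (hu : ContDiffOn ℝ (⊤ : ℕ∞) u Ω)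
    (himp : ∀ p ∈ Ω,
      u p = ψ p.2.1 * (p.2.2 - p.1 - ε * m (u p))
              + φ p.2.1 * (p.2.2 + p.1 + ε * m (u p)))
    (p : ℝ × ℝ × ℝ) (hp : p ∈ Ω) :
    pdx u p * (1 - ε * (φ p.2.1 - ψ p.2.1) * deriv m (u p)) = φ p.2.1 - ψ p.2.1 := by
  obtain ⟨x, y, t⟩ := p
  set a := φ y - ψ y with ha
  have hud : DifferentiableAt ℝ u (x, y, t) :=
    ((hu.contDiffAt (hΩ.mem_nhds hp)).differentiableAt (by simp))
  have hgd : DifferentiableAt ℝ (fun s => u (s, y, t)) x :=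
    hud.comp x (DifferentiableAt.prodMk differentiableAt_id (differentiableAt_const _))
  have hg : HasDerivAt (fun s => u (s, y, t)) (pdx u (x, y, t)) x := hgd.hasDerivAt
  have hmg : HasDerivAt (fun s => m (u (s, y, t)))
      (deriv m (u (x, y, t)) * pdx u (x, y, t)) x :=
    ((hm _).hasDerivAt).comp x hg
  have hrhs : HasDerivAt (fun s => (ψ y + φ y) * t + a * s + ε * a * m (u (s, y, t)))
      (a + ε * a * (deriv m (u (x, y, t)) * pdx u (x, y, t))) x := by
    have h1 : HasDerivAt (fun s : ℝ => a * s) a x := by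
      simpa using (hasDerivAt_id x).const_mul a
    have hh := ((hasDerivAt_const x ((ψ y + φ y) * t)).add h1).add (hmg.const_mul (ε * a))
    simp only [zero_add] at hh
    exact hh
  have hev : (fun s => u (s, y, t)) =ᶠ[nhds x]
      (fun s => (ψ y + φ y) * t + a * s + ε * a * m (u (s, y, t))) := by
    have hUopen : IsOpen {s : ℝ | (s, y, t) ∈ Ω} :=
      hΩ.preimage (by fun_prop)
    filter_upwards [hUopen.mem_nhds hp] with s hs
    have h := himp (s, y, t) hs
    simp only at h
    conv_lhs => rw [h]
    ring
  have hg2 : HasDerivAt (fun s => u (s, y, t))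
      (a + ε * a * (deriv m (u (x, y, t)) * pdx u (x, y, t))) x :=
    hrhs.congr_of_eventuallyEq hev
  have heq := hg.unique hg2
  simp only [pdx] at heq ⊢
  nlinarith [heq]

lemma aux_pdt (m ψ φ : ℝ → ℝ) (hm : Differentiable ℝ m) (ε : ℝ)
    (Ω : Set (ℝ × ℝ × ℝ)) (hΩ : IsOpen Ω)
    (u : ℝ × ℝ × ℝ → ℝ) (hu : ContDiffOn ℝ (⊤ : ℕ∞) u Ω)
    (himp : ∀ p ∈ Ω,
      u p = ψ p.2.1 * (p.2.2 - p.1 - ε * m (u p))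
              + φ p.2.1 * (p.2.2 + p.1 + ε * m (u p)))
    (p : ℝ × ℝ × ℝ) (hp : p ∈ Ω) :
    pdt u p * (1 - ε * (φ p.2.1 - ψ p.2.1) * deriv m (u p)) = ψ p.2.1 + φ p.2.1 := by
  obtain ⟨x, y, t⟩ := p
  set a := φ y - ψ y with ha
  set b := ψ y + φ y with hb
  have hud : DifferentiableAt ℝ u (x, y, t) :=
    ((hu.contDiffAt (hΩ.mem_nhds hp)).differentiableAt (by simp))
  have hgd : DifferentiableAt ℝ (fun s => u (x, y, s)) t :=
    hud.comp t (DifferentiableAt.prodMk (differentiableAt_const _)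
      (DifferentiableAt.prodMk (differentiableAt_const _) differentiableAt_id))
  have hg : HasDerivAt (fun s => u (x, y, s)) (pdt u (x, y, t)) t := hgd.hasDerivAt
  have hmg : HasDerivAt (fun s => m (u (x, y, s)))
      (deriv m (u (x, y, t)) * pdt u (x, y, t)) t :=
    ((hm _).hasDerivAt).comp t hg
  have hrhs : HasDerivAt (fun s => b * s + a * x + ε * a * m (u (x, y, s)))
      (b + ε * a * (deriv m (u (x, y, t)) * pdt u (x, y, t))) t := by
    have h1 : HasDerivAt (fun s : ℝ => b * s) b t := by
      simpa using (hasDerivAt_id t).const_mul b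
    have hh := (h1.add (hasDerivAt_const t (a * x))).add (hmg.const_mul (ε * a))
    simp only [add_zero] at hh
    exact hh
  have hev : (fun s => u (x, y, s)) =ᶠ[nhds t]
      (fun s => b * s + a * x + ε * a * m (u (x, y, s))) := by
    have hUopen : IsOpen {s : ℝ | (x, y, s) ∈ Ω} :=
      hΩ.preimage (by fun_prop)
    filter_upwards [hUopen.mem_nhds hp] with s hs
    have h := himp (x, y, s) hs
    simp only at h
    conv_lhs => rw [h]
    ring
  have hg2 : HasDerivAt (fun s => u (x, y, s))
      (b + ε * a * (deriv m (u (x, y, t)) * pdt u (x, y, t))) t :=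
    hrhs.congr_of_eventuallyEq hev
  have heq := hg.unique hg2
  simp only [pdt] at heq ⊢
  nlinarith [heq]

lemma aux_D (m ψ φ : ℝ → ℝ) (hm : Differentiable ℝ m) (ε : ℝ)
    (Ω : Set (ℝ × ℝ × ℝ)) (hΩ : IsOpen Ω)
    (u : ℝ × ℝ × ℝ → ℝ) (hu : ContDiffOn ℝ (⊤ : ℕ∞) u Ω)
    (himp : ∀ p ∈ Ω,
      u p = ψ p.2.1 * (p.2.2 - p.1 - ε * m (u p))
              + φ p.2.1 * (p.2.2 + p.1 + ε * m (u p)))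
    (p : ℝ × ℝ × ℝ) (hp : p ∈ Ω) :
    1 - ε * (φ p.2.1 - ψ p.2.1) * deriv m (u p) ≠ 0 := by
  intro h0
  have hx := aux_pdx m ψ φ hm ε Ω hΩ u hu himp p hp
  rw [h0, mul_zero] at hx
  rw [← hx] at h0
  simp at h0


theorem stmt_12
    (m ψ φ : ℝ → ℝ) (hm : ContDiff ℝ (⊤ : ℕ∞) m) (hψ : ContDiff ℝ (⊤ : ℕ∞) ψ) (hφ : ContDiff ℝ (⊤ : ℕ∞) φ)
    (ε : ℝ)
    (Ω : Set (ℝ × ℝ × ℝ)) (hΩ : IsOpen Ω)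
    (u : ℝ × ℝ × ℝ → ℝ) (hu : ContDiffOn ℝ (⊤ : ℕ∞) u Ω)
    -- the implicit relation u = ψ(y)(t − x − ε m(u)) + φ(y)(t + x + ε m(u)) on Ω
    (himp : ∀ p ∈ Ω,
      u p = ψ p.2.1 * (p.2.2 - p.1 - ε * m (u p))
              + φ p.2.1 * (p.2.2 + p.1 + ε * m (u p)))
    -- nondegeneracy: 1 + ε m'(u) u_x ≠ 0 on Ω
    (hD : ∀ p ∈ Ω, 1 + ε * deriv m (u p) * pdx u p ≠ 0) :
    ∀ p ∈ Ω,
      pdx (fun r =>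
          (ε * deriv m (u r) * (pdt u r) ^ 2 + pdx u r)
            / (1 + ε * deriv m (u r) * pdx u r)) p
        = pdt (pdt u) p := by
  have hm' : Differentiable ℝ m := hm.differentiable (by simp)
  have hdm : Differentiable ℝ (deriv m) := by
    have := (contDiff_infty_iff_deriv.mp (hm.of_le (by simp))).2
    exact this.differentiable (by simp)
  intro p hp
  obtain ⟨x, y, t⟩ := p
  set a := φ y - ψ y with ha
  set b := ψ y + φ y with hb
  -- formulas for pdx u, pdt u on the slice {q.2.1 = y}
  have hxq : ∀ q ∈ Ω, q.2.1 = y → pdx u q = a / (1 - ε * a * deriv m (u q)) := by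
    intro q hq hqy
    have h := aux_pdx m ψ φ hm' ε Ω hΩ u hu himp q hq
    have hDq := aux_D m ψ φ hm' ε Ω hΩ u hu himp q hq
    rw [hqy] at h hDq
    rw [eq_div_iff hDq]; exact h
  have htq : ∀ q ∈ Ω, q.2.1 = y → pdt u q = b / (1 - ε * a * deriv m (u q)) := by
    intro q hq hqy
    have h := aux_pdt m ψ φ hm' ε Ω hΩ u hu himp q hq
    have hDq := aux_D m ψ φ hm' ε Ω hΩ u hu himp q hq
    rw [hqy] at h hDq
    rw [eq_div_iff hDq]; exact h
  -- flux formula on the slice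
  have hfl : ∀ q ∈ Ω, q.2.1 = y →
      (ε * deriv m (u q) * (pdt u q) ^ 2 + pdx u q)
        / (1 + ε * deriv m (u q) * pdx u q)
      = ε * b ^ 2 * deriv m (u q) / (1 - ε * a * deriv m (u q)) + a := by
    intro q hq hqy
    have hDq := aux_D m ψ φ hm' ε Ω hΩ u hu himp q hq
    rw [hqy] at hDq
    have hden := hD q hq
    rw [hxq q hq hqy] at hden ⊢
    rw [htq q hq hqy]
    rw [div_eq_iff hden]
    have hI : (1 - ε * a * deriv m (u q))⁻¹ * (1 - ε * a * deriv m (u q)) = 1 :=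
      inv_mul_cancel₀ hDq
    simp only [div_eq_mul_inv]
    linear_combination (ε * b ^ 2 * deriv m (u q) * (1 - ε * a * deriv m (u q))⁻¹ + a) * hI
  have hD0 : 1 - ε * a * deriv m (u (x, y, t)) ≠ 0 := by
    have := aux_D m ψ φ hm' ε Ω hΩ u hu himp (x, y, t) hp
    simpa using this
  set M0 := deriv m (u (x, y, t)) with hM0
  set m2u := deriv (deriv m) (u (x, y, t)) with hm2u
  set ux := pdx u (x, y, t) with hux
  set ut := pdt u (x, y, t) with hut
  have hux' : ux = a / (1 - ε * a * M0) := hxq (x, y, t) hp rfl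
  have hut' : ut = b / (1 - ε * a * M0) := htq (x, y, t) hp rfl
  -- differentiability of sections
  have hud : DifferentiableAt ℝ u (x, y, t) :=
    ((hu.contDiffAt (hΩ.mem_nhds hp)).differentiableAt (by simp))
  have hgX : HasDerivAt (fun s => u (s, y, t)) ux x :=
    (hud.comp x (DifferentiableAt.prodMk differentiableAt_id (differentiableAt_const _))).hasDerivAt
  have hgT : HasDerivAt (fun s => u (x, y, s)) ut t :=
    (hud.comp t (DifferentiableAt.prodMk (differentiableAt_const _)
      (DifferentiableAt.prodMk (differentiableAt_const _) differentiableAt_id))).hasDerivAt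
  have hMgX : HasDerivAt (fun s => deriv m (u (s, y, t))) (m2u * ux) x :=
    ((hdm _).hasDerivAt).comp x hgX
  have hMgT : HasDerivAt (fun s => deriv m (u (x, y, s))) (m2u * ut) t :=
    ((hdm _).hasDerivAt).comp t hgT
  -- LHS
  have hevX : (fun s => (ε * deriv m (u (s, y, t)) * (pdt u (s, y, t)) ^ 2 + pdx u (s, y, t))
        / (1 + ε * deriv m (u (s, y, t)) * pdx u (s, y, t)))
      =ᶠ[nhds x] (fun s => ε * b ^ 2 * deriv m (u (s, y, t))
        / (1 - ε * a * deriv m (u (s, y, t))) + a) := by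
    have hUopen : IsOpen {s : ℝ | (s, y, t) ∈ Ω} := hΩ.preimage (by fun_prop)
    filter_upwards [hUopen.mem_nhds hp] with s hs
    exact hfl (s, y, t) hs rfl
  have hN : HasDerivAt (fun s => ε * b ^ 2 * deriv m (u (s, y, t)))
      (ε * b ^ 2 * (m2u * ux)) x := hMgX.const_mul _
  have hDen : HasDerivAt (fun s => 1 - ε * a * deriv m (u (s, y, t)))
      (-(ε * a * (m2u * ux))) x := by
    have hh := (hasDerivAt_const x (1 : ℝ)).sub (hMgX.const_mul (ε * a))
    simp only [zero_sub] at hh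
    exact hh
  have hQ : HasDerivAt (fun s => ε * b ^ 2 * deriv m (u (s, y, t))
        / (1 - ε * a * deriv m (u (s, y, t))) + a)
      ((ε * b ^ 2 * (m2u * ux) * (1 - ε * a * M0)
        - ε * b ^ 2 * M0 * -(ε * a * (m2u * ux))) / (1 - ε * a * M0) ^ 2) x :=
    (hN.div hDen hD0).add_const a
  have hLHS : pdx (fun r =>
          (ε * deriv m (u r) * (pdt u r) ^ 2 + pdx u r)
            / (1 + ε * deriv m (u r) * pdx u r)) (x, y, t)
      = (ε * b ^ 2 * (m2u * ux) * (1 - ε * a * M0)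
        - ε * b ^ 2 * M0 * -(ε * a * (m2u * ux))) / (1 - ε * a * M0) ^ 2 := by
    show deriv (fun s => (ε * deriv m (u (s, y, t)) * (pdt u (s, y, t)) ^ 2 + pdx u (s, y, t))
        / (1 + ε * deriv m (u (s, y, t)) * pdx u (s, y, t))) x = _
    rw [hevX.deriv_eq]
    exact hQ.deriv
  -- RHS
  have hevT : (fun s => pdt u (x, y, s)) =ᶠ[nhds t]
      (fun s => b / (1 - ε * a * deriv m (u (x, y, s)))) := by
    have hUopen : IsOpen {s : ℝ | (x, y, s) ∈ Ω} := hΩ.preimage (by fun_prop)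
    filter_upwards [hUopen.mem_nhds hp] with s hs
    exact htq (x, y, s) hs rfl
  have hDen2 : HasDerivAt (fun s => 1 - ε * a * deriv m (u (x, y, s)))
      (-(ε * a * (m2u * ut))) t := by
    have hh := (hasDerivAt_const t (1 : ℝ)).sub (hMgT.const_mul (ε * a))
    simp only [zero_sub] at hh
    exact hh
  have hQ2 : HasDerivAt (fun s => b / (1 - ε * a * deriv m (u (x, y, s))))
      ((0 * (1 - ε * a * M0) - b * -(ε * a * (m2u * ut))) / (1 - ε * a * M0) ^ 2) t :=
    (hasDerivAt_const t b).div hDen2 hD0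
  have hRHS : pdt (pdt u) (x, y, t)
      = (0 * (1 - ε * a * M0) - b * -(ε * a * (m2u * ut))) / (1 - ε * a * M0) ^ 2 := by
    show deriv (fun s => pdt u (x, y, s)) t = _
    rw [hevT.deriv_eq]
    exact hQ2.deriv
  rw [hLHS, hRHS, hux', hut']
  field_simp
  ring
end
end
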